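/- Let λ, μ ∈ ℝ, let ℓ be a natural number, let F be a homogeneous pair, and let a₀, …, a_ℓ be homogeneous pairs such that |a_i| + i has constant value p modulo 2 (so that the differential operator A = Σ_{i=0}^{ℓ} M_{a_i} ∘ D^i is homogeneous of parity p). Then the operator 𝔏^{λ,μ}_F(A) := 𝔏^μ_F ∘ A − (−1)^{p·|F|} A ∘ 𝔏^λ_F is again of the form Σ_{i=0}^{ℓ} M_{a_i^F} ∘ D^i, with coefficients a_i^F = 𝔏^{μ−λ−i/2}_F(a_i) − Σ_{j=i+1}^{ℓ} (−1)^{(|F|+|a_j|)(j−i)} · ζ_{i,j,λ} · (D^{j−i}(F′))·a_j, where F′ is the componentwise derivative of F and the product is the pair product. (This is Lemma 5.1, the explicit formula for the natural action of the contact superalgebra K(1) on the module of differential operators on weighted densities over S^{1|1}.) -/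

import Mathlib

open Real Function

/-- Model of C^∞(S^{1|1}): a pair (f₀, f₁) represents f₀(x) + θ f₁(x). -/
abbrev SPair : Type := (ℝ → ℝ) × (ℝ → ℝ)

/-- The odd vector field η̄ = ∂_θ − θ∂ₓ acting on pairs. -/
noncomputable def D (F : SPair) : SPair :=
  (F.2, fun x => -deriv F.1 x)

/-- Product of super functions: (f₀ + θf₁)(g₀ + θg₁) = f₀g₀ + θ(f₀g₁ + f₁g₀). -/
def pmul (F G : SPair) : SPair :=
  (fun x => F.1 x * G.1 x, fun x => F.1 x * G.2 x + F.2 x * G.1 x)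

/-- Membership in the model: both components smooth and 2π-periodic. -/
def InModel (F : SPair) : Prop :=
  ContDiff ℝ (⊤ : ℕ∞) F.1 ∧ ContDiff ℝ (⊤ : ℕ∞) F.2 ∧
    Periodic F.1 (2 * π) ∧ Periodic F.2 (2 * π)

/-- F is homogeneous of parity p: even (p = 0) iff odd part vanishes,
odd (p = 1) iff even part vanishes. -/
def IsHom (F : SPair) (p : ℕ) : Prop :=
  (p = 0 ∧ F.2 = 0) ∨ (p = 1 ∧ F.1 = 0)

/-- The super binomial coefficient (j choose i)_s. -/
def sbinom (j i : ℕ) : ℕ :=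
  if i % 2 = 0 ∨ j % 2 = 1 then Nat.choose (j / 2) (i / 2) else 0

/-- The Lie derivative 𝔏^λ_F of λ-densities along the contact field X_F,
for F = (f, k) (extended additively from the homogeneous cases). -/
noncomputable def Lder (l : ℝ) (F G : SPair) : SPair :=
  (fun x => F.1 x * deriv G.1 x + l * deriv F.1 x * G.1 x
      + (1 / 2) * F.2 x * G.2 x,
   fun x => F.1 x * deriv G.2 x + (l + 1 / 2) * deriv F.1 x * G.2 x
      + (1 / 2) * F.2 x * deriv G.1 x + l * deriv F.2 x * G.1 x)

/-- The contact bracket {F, G}, extended bilinearly from the homogeneous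
component formulas. -/
noncomputable def cbracket (F G : SPair) : SPair :=
  (fun x => F.1 x * deriv G.1 x - deriv F.1 x * G.1 x
      + (1 / 2) * F.2 x * G.2 x,
   fun x => F.1 x * deriv G.2 x - (1 / 2) * deriv F.1 x * G.2 x
      + (1 / 2) * F.2 x * deriv G.1 x - deriv F.2 x * G.1 x)

/-- Componentwise derivative F′ of a pair. -/
noncomputable def pderiv (F : SPair) : SPair :=
  (fun x => deriv F.1 x, fun x => deriv F.2 x)

/-- ζ_{i,j,λ} = λ·(j choose j−i)_s − ((−1)^i/2)·(j choose j−i+1)_s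
+ (j choose j−i+2)_s. -/
noncomputable def zeta (i j : ℕ) (l : ℝ) : ℝ :=
  l * (sbinom j (j - i) : ℝ) - ((-1 : ℝ) ^ i / 2) * (sbinom j (j - i + 1) : ℝ)
    + (sbinom j (j - i + 2) : ℝ)

abbrev CD (f : ℝ → ℝ) : Prop := ContDiff ℝ (⊤ : ℕ∞) f
lemma cdDeriv {f : ℝ → ℝ} (h : CD f) : CD (deriv f) :=
  (contDiff_infty_iff_deriv.mp h).2
lemma cdAt {f : ℝ → ℝ} (h : CD f) (x : ℝ) : DifferentiableAt ℝ f x :=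
  (h.differentiable (by simp)).differentiableAt
lemma cdD {f : ℝ → ℝ} (h : CD f) : Differentiable ℝ f := h.differentiable (by simp)

def Sm (A : SPair) : Prop := CD A.1 ∧ CD A.2

lemma smD {A : SPair} (h : Sm A) : Sm (D A) :=
  ⟨h.2, (cdDeriv h.1).neg⟩
lemma smDn {A : SPair} (h : Sm A) (n : ℕ) : Sm (D^[n] A) := by
  induction n with
  | zero => exact h
  | succ n ih => rw [Function.iterate_succ_apply']; exact smD ih

lemma smPmul {A B : SPair} (hA : Sm A) (hB : Sm B) : Sm (pmul A B) :=
  ⟨hA.1.mul hB.1, (hA.1.mul hB.2).add (hA.2.mul hB.1)⟩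

-- zero pair facts
lemma derivZeroFun : deriv (0 : ℝ → ℝ) = 0 := by
  funext x; exact deriv_const x 0

-- pmul algebra
lemma pmul_comm (A B : SPair) : pmul A B = pmul B A := by
  unfold pmul; refine Prod.ext ?_ ?_ <;> funext x <;> simp <;> ring
lemma passoc (a u v : SPair) : pmul a (pmul u v) = pmul (pmul u a) v := by
  unfold pmul; refine Prod.ext ?_ ?_ <;> funext x <;> simp <;> ring
lemma pmul_add' (A B C : SPair) : pmul (B + C) A = pmul B A + pmul C A := by
  unfold pmul; refine Prod.ext ?_ ?_ <;> funext x <;> simp <;> ring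
lemma pmul_sub' (A B C : SPair) : pmul (B - C) A = pmul B A - pmul C A := by
  unfold pmul; refine Prod.ext ?_ ?_ <;> funext x <;> simp <;> ring
lemma pmul_smul (c : ℝ) (A B : SPair) : pmul A (c • B) = c • pmul A B := by
  unfold pmul; refine Prod.ext ?_ ?_ <;> funext x <;> simp <;> ring
lemma pmul_smul' (c : ℝ) (A B : SPair) : pmul (c • B) A = c • pmul B A := by
  unfold pmul; refine Prod.ext ?_ ?_ <;> funext x <;> simp <;> ring
lemma pmul_sum {s : Finset ℕ} (B : ℕ → SPair) (A : SPair) :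
    pmul (∑ i ∈ s, B i) A = ∑ i ∈ s, pmul (B i) A := by
  classical
  induction s using Finset.induction with
  | empty =>
      simp only [Finset.sum_empty]
      unfold pmul; refine Prod.ext ?_ ?_ <;> funext x <;> simp
  | @insert i t hni ih =>
      rw [Finset.sum_insert hni, Finset.sum_insert hni, pmul_add', ih]
lemma pmul_sum₂ {s : Finset ℕ} (B : ℕ → SPair) (A : SPair) :
    pmul A (∑ i ∈ s, B i) = ∑ i ∈ s, pmul A (B i) := by
  rw [pmul_comm, pmul_sum]; exact Finset.sum_congr rfl fun i _ => pmul_comm _ _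

-- sign lemmas
lemma m1eq {a b : ℕ} (h : (a + b) % 2 = 0) : (-1:ℝ)^a = (-1:ℝ)^b := by
  have h2 : (-1:ℝ)^(a+b) = 1 := by
    obtain ⟨k, hk⟩ : ∃ k, a + b = 2*k := ⟨(a+b)/2, by omega⟩
    rw [hk, pow_mul]; norm_num
  calc (-1:ℝ)^a = (-1:ℝ)^a * ((-1:ℝ)^b * (-1:ℝ)^b) := by
        rw [← pow_add]; obtain ⟨k, hk⟩ : ∃ k, b + b = 2*k := ⟨b, by omega⟩
        rw [hk, pow_mul]; norm_num
    _ = ((-1:ℝ)^(a+b)) * (-1:ℝ)^b := by rw [pow_add]; ring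
    _ = (-1:ℝ)^b := by rw [h2, one_mul]
lemma m1sq (a : ℕ) : (-1:ℝ)^a * (-1:ℝ)^a = 1 := by
  rw [← pow_add]
  obtain ⟨k, hk⟩ : ∃ k, a + a = 2*k := ⟨a, by omega⟩
  rw [hk, pow_mul]; norm_num

lemma homD {A : SPair} {q : ℕ} (h : IsHom A q) : IsHom (D A) ((q+1) % 2) := by
  rcases h with ⟨hq, h2⟩ | ⟨hq, h1⟩
  · right; subst hq; exact ⟨rfl, h2⟩
  · left; subst hq
    refine ⟨rfl, ?_⟩
    show (fun x => -deriv A.1 x) = 0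
    rw [h1]; funext x; simp [derivZeroFun]
lemma homDn {A : SPair} {q : ℕ} (h : IsHom A q) (n : ℕ) : IsHom (D^[n] A) ((q+n) % 2) := by
  induction n with
  | zero =>
      simp only [Function.iterate_zero_apply, Nat.add_zero]
      rcases h with ⟨hq, h2⟩ | ⟨hq, h1⟩
      · left; exact ⟨by omega, h2⟩
      · right; exact ⟨by omega, h1⟩
  | succ n ih =>
      rw [Function.iterate_succ_apply']
      have := homD ih
      rwa [show ((q + n) % 2 + 1) % 2 = (q + (n+1)) % 2 by omega] at this
lemma homPderiv {A : SPair} {q : ℕ} (h : IsHom A q) : IsHom (pderiv A) q := by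
  rcases h with ⟨hq, h2⟩ | ⟨hq, h1⟩
  · left; refine ⟨hq, ?_⟩; show (fun x => deriv A.2 x) = 0; rw [h2]; funext x; simp [derivZeroFun]
  · right; refine ⟨hq, ?_⟩; show (fun x => deriv A.1 x) = 0; rw [h1]; funext x; simp [derivZeroFun]

-- sbinom values
lemma sb_ee (a b : ℕ) : sbinom (2*a) (2*b) = Nat.choose a b := by
  unfold sbinom; rw [if_pos (by omega)]; congr 1 <;> omega
lemma sb_eo (a b : ℕ) : sbinom (2*a) (2*b+1) = 0 := by
  unfold sbinom; rw [if_neg (by omega)]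
lemma sb_oe (a b : ℕ) : sbinom (2*a+1) (2*b) = Nat.choose a b := by
  unfold sbinom; rw [if_pos (by omega)]; congr 1 <;> omega
lemma sb_oo (a b : ℕ) : sbinom (2*a+1) (2*b+1) = Nat.choose a b := by
  unfold sbinom; rw [if_pos (by omega)]; congr 1 <;> omega
lemma sb_gt {j i : ℕ} (h : j < i) : sbinom j i = 0 := by
  unfold sbinom; split
  · exact Nat.choose_eq_zero_of_lt (by omega)
  · rfl
lemma sb_self (j : ℕ) : sbinom j j = 1 := by
  unfold sbinom
  rw [if_pos (by omega)]; exact Nat.choose_self _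
lemma sb_zero (j : ℕ) : sbinom j 0 = 1 := by
  unfold sbinom; rw [if_pos (by omega)]; simp


-- sbinom recurrence (real form), for r <= n
lemma sbRec {n r : ℕ} (h : r ≤ n) :
    ((sbinom (n+1) (r+1) : ℝ)) = (sbinom n (r+1) : ℝ) + (-1:ℝ)^(n-r) * (sbinom n r : ℝ) := by
  rcases Nat.even_or_odd n with hn | hn <;> rcases Nat.even_or_odd r with hr | hr
  · obtain ⟨A, rfl⟩ : ∃ A, n = 2*A := ⟨n/2, by rcases hn with ⟨c,hc⟩; omega⟩
    obtain ⟨B, rfl⟩ : ∃ B, r = 2*B := ⟨r/2, by rcases hr with ⟨c,hc⟩; omega⟩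
    rw [show 2*A - 2*B = 2*(A-B) by omega, sb_oo, sb_eo, sb_ee, pow_mul]
    norm_num
  · obtain ⟨A, rfl⟩ : ∃ A, n = 2*A := ⟨n/2, by rcases hn with ⟨c,hc⟩; omega⟩
    obtain ⟨B, rfl⟩ : ∃ B, r = 2*B+1 := ⟨r/2, by rcases hr with ⟨c,hc⟩; omega⟩
    rw [show (2*B+1)+1 = 2*(B+1) by ring, sb_oe, sb_ee,
      show 2*A - (2*B+1) = 2*(A-B-1)+1 by omega, sb_eo, pow_succ, pow_mul]
    norm_num
  · obtain ⟨A, rfl⟩ : ∃ A, n = 2*A+1 := ⟨n/2, by rcases hn with ⟨c,hc⟩; omega⟩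
    obtain ⟨B, rfl⟩ : ∃ B, r = 2*B := ⟨r/2, by rcases hr with ⟨c,hc⟩; omega⟩
    rw [show (2*A+1)+1 = 2*(A+1) by ring, sb_eo, sb_oo,
      show 2*A+1 - 2*B = 2*(A-B)+1 by omega, sb_oe, pow_succ, pow_mul]
    norm_num
  · obtain ⟨A, rfl⟩ : ∃ A, n = 2*A+1 := ⟨n/2, by rcases hn with ⟨c,hc⟩; omega⟩
    obtain ⟨B, rfl⟩ : ∃ B, r = 2*B+1 := ⟨r/2, by rcases hr with ⟨c,hc⟩; omega⟩
    rw [show (2*A+1)+1 = 2*(A+1) by ring, show (2*B+1)+1 = 2*(B+1) by ring,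
      sb_ee, sb_oe, show 2*A+1 - (2*B+1) = 2*(A-B) by omega, sb_oo, pow_mul]
    rw [Nat.choose_succ_succ A B]
    push_cast; ring

-- zeta boundary and recurrence
lemma zeta_zero_succ (j : ℕ) (l : ℝ) : zeta 0 (j+1) l = l := by
  unfold zeta
  rw [Nat.sub_zero, sb_self, sb_gt (by omega), sb_gt (by omega)]
  norm_num

lemma zeta_rec {i j : ℕ} (h : i < j) (l : ℝ) :
    zeta (i+1) (j+1) l
      = zeta i j (l+1/2) + (-1:ℝ)^((j-i)*(i+1)) * l * (sbinom j (j-i-1) : ℝ) := by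
  unfold zeta
  rcases Nat.even_or_odd j with hj | hj <;> rcases Nat.even_or_odd i with hi | hi
  · -- j even, i even
    obtain ⟨A, rfl⟩ : ∃ A, j = 2*A := ⟨j/2, by rcases hj with ⟨c,hc⟩; omega⟩
    obtain ⟨B, rfl⟩ : ∃ B, i = 2*B := ⟨i/2, by rcases hi with ⟨c,hc⟩; omega⟩
    obtain ⟨C, rfl⟩ : ∃ C, A = B+C+1 := ⟨A-B-1, by omega⟩
    rw [show 2*(B+C+1)+1 - (2*B+1) = 2*(C+1) by omega,
        show 2*(B+C+1) - 2*B = 2*(C+1) by omega,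
        show 2*(C+1) - 1 = 2*C+1 by omega,
        show 2*(C+1)+2 = 2*(C+2) by ring,
        ]
    simp only [sb_ee, sb_eo, sb_oe, sb_oo]
    have s1 : (-1:ℝ)^(2*B+1) = -1 := by rw [pow_succ, pow_mul]; norm_num
    have s2 : (-1:ℝ)^(2*B) = 1 := by rw [pow_mul]; norm_num
    have s3 : (-1:ℝ)^(2*(C+1)*(2*B+1)) = 1 := by
      rw [show 2*(C+1)*(2*B+1) = 2*((C+1)*(2*B+1)) by ring, pow_mul]; norm_num
    rw [s1, s2, s3]; push_cast; ring
  · -- j even, i odd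
    obtain ⟨A, rfl⟩ : ∃ A, j = 2*A := ⟨j/2, by rcases hj with ⟨c,hc⟩; omega⟩
    obtain ⟨B, rfl⟩ : ∃ B, i = 2*B+1 := ⟨i/2, by rcases hi with ⟨c,hc⟩; omega⟩
    obtain ⟨C, rfl⟩ : ∃ C, A = B+C+1 := ⟨A-B-1, by omega⟩
    rw [show 2*(B+C+1)+1 - (2*B+1+1) = 2*C+1 by omega,
        show 2*(B+C+1) - (2*B+1) = 2*C+1 by omega,
        show 2*C+1 - 1 = 2*C by omega,
        show 2*C+1+1 = 2*(C+1) by ring,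
        show 2*C+1+2 = 2*(C+1)+1 by ring,
        ]
    simp only [sb_ee, sb_eo, sb_oe, sb_oo]
    have s1 : (-1:ℝ)^(2*B+1+1) = 1 := by
      rw [show 2*B+1+1 = 2*(B+1) by ring, pow_mul]; norm_num
    have s2 : (-1:ℝ)^(2*B+1) = -1 := by rw [pow_succ, pow_mul]; norm_num
    have s3 : (-1:ℝ)^((2*C+1)*(2*B+1+1)) = 1 := by
      rw [show (2*C+1)*(2*B+1+1) = 2*((2*C+1)*(B+1)) by ring, pow_mul]; norm_num
    rw [s1, s2, s3]; push_cast; ring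
  · -- j odd, i even
    obtain ⟨A, rfl⟩ : ∃ A, j = 2*A+1 := ⟨j/2, by rcases hj with ⟨c,hc⟩; omega⟩
    obtain ⟨B, rfl⟩ : ∃ B, i = 2*B := ⟨i/2, by rcases hi with ⟨c,hc⟩; omega⟩
    obtain ⟨C, rfl⟩ : ∃ C, A = B+C := ⟨A-B, by omega⟩
    rw [show 2*(B+C)+1+1 - (2*B+1) = 2*C+1 by omega,
        show 2*(B+C)+1 - 2*B = 2*C+1 by omega,
        show 2*C+1 - 1 = 2*C by omega,
        show 2*C+1+1 = 2*(C+1) by ring,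
        show 2*C+1+2 = 2*(C+1)+1 by ring,
        show 2*(B+C)+1+1 = 2*(B+C+1) by ring,
        ]
    simp only [sb_ee, sb_eo, sb_oe, sb_oo]
    have s1 : (-1:ℝ)^(2*B+1) = -1 := by rw [pow_succ, pow_mul]; norm_num
    have s2 : (-1:ℝ)^(2*B) = 1 := by rw [pow_mul]; norm_num
    have s3 : (-1:ℝ)^((2*C+1)*(2*B+1)) = -1 := by
      rw [show (2*C+1)*(2*B+1) = 2*(2*B*C+B+C)+1 by ring, pow_succ, pow_mul]; norm_num
    rw [s1, s2, s3, Nat.choose_succ_succ' (B+C) C]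
    push_cast; ring
  · -- j odd, i odd
    obtain ⟨A, rfl⟩ : ∃ A, j = 2*A+1 := ⟨j/2, by rcases hj with ⟨c,hc⟩; omega⟩
    obtain ⟨B, rfl⟩ : ∃ B, i = 2*B+1 := ⟨i/2, by rcases hi with ⟨c,hc⟩; omega⟩
    obtain ⟨C, rfl⟩ : ∃ C, A = B+C+1 := ⟨A-B-1, by omega⟩
    rw [show 2*(B+C+1)+1+1 - (2*B+1+1) = 2*(C+1) by omega,
        show 2*(B+C+1)+1 - (2*B+1) = 2*(C+1) by omega,
        show 2*(C+1) - 1 = 2*C+1 by omega,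
        show 2*(C+1)+2 = 2*(C+2) by ring,
        show 2*(B+C+1)+1+1 = 2*(B+C+1+1) by ring,
        ]
    simp only [sb_ee, sb_eo, sb_oe, sb_oo]
    have s1 : (-1:ℝ)^(2*B+1+1) = 1 := by
      rw [show 2*B+1+1 = 2*(B+1) by ring, pow_mul]; norm_num
    have s2 : (-1:ℝ)^(2*B+1) = -1 := by rw [pow_succ, pow_mul]; norm_num
    have s3 : (-1:ℝ)^(2*(C+1)*(2*B+1+1)) = 1 := by
      rw [show 2*(C+1)*(2*B+1+1) = 2*((C+1)*(2*B+2)) by ring, pow_mul]; norm_num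
    rw [s1, s2, s3, show C+2 = C+1+1 by omega, show B+C+1+1 = (B+C+1)+1 from rfl,
        Nat.choose_succ_succ' (B+C+1) C, Nat.choose_succ_succ' (B+C+1) (C+1)]
    push_cast; ring

-- Part C: structural rfl lemmas, smoothness closure, linearity
lemma fun_add (u v : ℝ → ℝ) : u + v = fun x => u x + v x := rfl
lemma fun_smul (c : ℝ) (u : ℝ → ℝ) : c • u = fun x => c * u x := rfl
lemma fun_zero : (0 : ℝ → ℝ) = fun _ => (0:ℝ) := rfl

lemma smAdd {A B : SPair} (hA : Sm A) (hB : Sm B) : Sm (A + B) :=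
  ⟨hA.1.add hB.1, hA.2.add hB.2⟩
lemma smSmul (c : ℝ) {A : SPair} (hA : Sm A) : Sm (c • A) :=
  ⟨hA.1.const_smul c, hA.2.const_smul c⟩
lemma smZero : Sm (0 : SPair) := ⟨contDiff_const, contDiff_const⟩
lemma smSum {s : Finset ℕ} {B : ℕ → SPair} (h : ∀ i ∈ s, Sm (B i)) :
    Sm (∑ i ∈ s, B i) := by
  classical
  induction s using Finset.induction with
  | empty => simpa using smZero
  | @insert i t hni ih =>
      rw [Finset.sum_insert hni]
      exact smAdd (h i (Finset.mem_insert_self i t))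
        (ih fun j hj => h j (Finset.mem_insert_of_mem hj))
lemma smLder (l : ℝ) {F G : SPair} (hF : Sm F) (hG : Sm G) : Sm (Lder l F G) := by
  constructor
  · exact ((hF.1.mul (cdDeriv hG.1)).add ((contDiff_const.mul (cdDeriv hF.1)).mul hG.1)).add
      ((contDiff_const.mul hF.2).mul hG.2)
  · exact (((hF.1.mul (cdDeriv hG.2)).add ((contDiff_const.mul (cdDeriv hF.1)).mul hG.2)).add
      ((contDiff_const.mul hF.2).mul (cdDeriv hG.1))).add ((contDiff_const.mul (cdDeriv hF.2)).mul hG.1)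
lemma smPderiv {F : SPair} (hF : Sm F) : Sm (pderiv F) :=
  ⟨by exact cdDeriv hF.1, by exact cdDeriv hF.2⟩

lemma D_add {A B : SPair} (hA : Sm A) (hB : Sm B) : D (A + B) = D A + D B := by
  refine Prod.ext ?_ ?_ <;> funext x <;>
    simp only [D, Prod.fst_add, Prod.snd_add, Pi.add_apply, fun_add]
  rw [deriv_fun_add (cdAt hA.1 x) (cdAt hB.1 x)]; ring
lemma D_smul (c : ℝ) {A : SPair} (hA : Sm A) : D (c • A) = c • D A := by
  refine Prod.ext ?_ ?_ <;> funext x <;>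
    simp only [D, Prod.smul_fst, Prod.smul_snd, Pi.smul_apply, smul_eq_mul, fun_smul]
  rw [deriv_const_mul c (cdAt hA.1 x)]; ring
lemma D_sum {s : Finset ℕ} {B : ℕ → SPair} (h : ∀ i ∈ s, Sm (B i)) :
    D (∑ i ∈ s, B i) = ∑ i ∈ s, D (B i) := by
  classical
  induction s using Finset.induction with
  | empty =>
      simp only [Finset.sum_empty]
      refine Prod.ext ?_ ?_ <;> funext x <;>
        simp [D, fun_zero, derivZeroFun]
  | @insert i t hni ih =>
      rw [Finset.sum_insert hni, Finset.sum_insert hni,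
        D_add (h i (Finset.mem_insert_self i t)) (smSum fun j hj => h j (Finset.mem_insert_of_mem hj)),
        ih fun j hj => h j (Finset.mem_insert_of_mem hj)]

lemma Dn_add (n : ℕ) {A B : SPair} (hA : Sm A) (hB : Sm B) :
    D^[n] (A + B) = D^[n] A + D^[n] B := by
  induction n generalizing A B with
  | zero => rfl
  | succ n ih => rw [Function.iterate_succ_apply, Function.iterate_succ_apply,
      Function.iterate_succ_apply, D_add hA hB, ih (smD hA) (smD hB)]
lemma Dn_smul (n : ℕ) (c : ℝ) {A : SPair} (hA : Sm A) : D^[n] (c • A) = c • D^[n] A := by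
  induction n generalizing A with
  | zero => rfl
  | succ n ih => rw [Function.iterate_succ_apply, Function.iterate_succ_apply,
      D_smul c hA, ih (smD hA)]

lemma Lder_add (l : ℝ) (F : SPair) {A B : SPair} (hA : Sm A) (hB : Sm B) :
    Lder l F (A + B) = Lder l F A + Lder l F B := by
  refine Prod.ext ?_ ?_ <;> funext x <;>
    simp only [Lder, Prod.fst_add, Prod.snd_add, Pi.add_apply, fun_add] <;>
    (try rw [deriv_fun_add (cdAt hA.1 x) (cdAt hB.1 x)]) <;>
    (try rw [deriv_fun_add (cdAt hA.2 x) (cdAt hB.2 x)]) <;> ring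
lemma Lder_sum (l : ℝ) (F : SPair) {s : Finset ℕ} {B : ℕ → SPair} (h : ∀ i ∈ s, Sm (B i)) :
    Lder l F (∑ i ∈ s, B i) = ∑ i ∈ s, Lder l F (B i) := by
  classical
  induction s using Finset.induction with
  | empty =>
      simp only [Finset.sum_empty]
      refine Prod.ext ?_ ?_ <;> funext x <;>
        simp [Lder, fun_zero, derivZeroFun]
  | @insert i t hni ih =>
      rw [Finset.sum_insert hni, Finset.sum_insert hni,
        Lder_add l F (h i (Finset.mem_insert_self i t))
          (smSum fun j hj => h j (Finset.mem_insert_of_mem hj)),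
        ih fun j hj => h j (Finset.mem_insert_of_mem hj)]

-- Part D: one-step Leibniz lemmas
lemma Dpmul {u v : SPair} {qu : ℕ} (hu : IsHom u qu) (su : Sm u) (sv : Sm v) :
    D (pmul u v) = pmul (D u) v + ((-1:ℝ)^qu) • pmul u (D v) := by
  have d1 := cdD su.1; have d2 := cdD su.2; have d3 := cdD sv.1; have d4 := cdD sv.2
  rcases hu with ⟨rfl, h2⟩ | ⟨rfl, h1⟩
  · refine Prod.ext ?_ ?_ <;> funext x <;>
      simp only [D, pmul, Prod.fst_add, Prod.snd_add, Pi.add_apply, Prod.smul_fst, Prod.smul_snd,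
        Pi.smul_apply, smul_eq_mul, pow_zero, pow_one, h2, Pi.zero_apply, mul_zero, zero_mul,
        add_zero, zero_add, one_mul] <;>
      (try simp (disch := fun_prop) only [deriv_fun_add, deriv_fun_mul, deriv_const_mul, deriv_const', deriv_const]) <;> ring
  · refine Prod.ext ?_ ?_ <;> funext x <;>
      simp only [D, pmul, Prod.fst_add, Prod.snd_add, Pi.add_apply, Prod.smul_fst, Prod.smul_snd,
        Pi.smul_apply, smul_eq_mul, pow_zero, pow_one, h1, Pi.zero_apply, mul_zero, zero_mul,
        add_zero, zero_add, one_mul, derivZeroFun] <;>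
      (try simp (disch := fun_prop) only [deriv_fun_add, deriv_fun_mul, deriv_const_mul, deriv_const', deriv_const]) <;> ring

lemma lderD {F : SPair} {pF : ℕ} (hF : IsHom F pF) (sF : Sm F) {G : SPair} (sG : Sm G) (l : ℝ) :
    D (Lder l F G) = ((-1:ℝ)^pF) • Lder (l + 1/2) F (D G) + l • pmul (D (pderiv F)) G := by
  have d1 := cdD sF.1; have d2 := cdD sF.2; have d3 := cdD sG.1; have d4 := cdD sG.2
  have d5 := cdD (cdDeriv sF.1); have d6 := cdD (cdDeriv sF.2)
  have d7 := cdD (cdDeriv sG.1); have d8 := cdD (cdDeriv sG.2)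
  rcases hF with ⟨rfl, h2⟩ | ⟨rfl, h1⟩
  · refine Prod.ext ?_ ?_ <;> funext x <;>
      simp only [D, Lder, pmul, pderiv, Prod.fst_add, Prod.snd_add, Pi.add_apply, Prod.smul_fst,
        Prod.smul_snd, Pi.smul_apply, smul_eq_mul, pow_zero, pow_one, h2, Pi.zero_apply,
        derivZeroFun, mul_zero, zero_mul, add_zero, zero_add, one_mul, neg_zero] <;>
      (try simp (disch := fun_prop) only [deriv_fun_add, deriv_fun_mul, deriv_const_mul, deriv.fun_neg, deriv_const', deriv_const]) <;> ring
  · refine Prod.ext ?_ ?_ <;> funext x <;>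
      simp only [D, Lder, pmul, pderiv, Prod.fst_add, Prod.snd_add, Pi.add_apply, Prod.smul_fst,
        Prod.smul_snd, Pi.smul_apply, smul_eq_mul, pow_zero, pow_one, h1, Pi.zero_apply,
        derivZeroFun, mul_zero, zero_mul, add_zero, zero_add, one_mul, neg_zero] <;>
      (try simp (disch := fun_prop) only [deriv_fun_add, deriv_fun_mul, deriv_const_mul, deriv.fun_neg, deriv_const', deriv_const]) <;> ring

lemma lderLeibniz {F a : SPair} {pF pa : ℕ} (hF : IsHom F pF) (ha : IsHom a pa)
    (sF : Sm F) (sa : Sm a) {B : SPair} (sB : Sm B) (m lp : ℝ) :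
    Lder m F (pmul a B)
      = pmul (Lder (m - lp) F a) B + ((-1:ℝ)^(pF*pa)) • pmul a (Lder lp F B) := by
  have d1 := cdD sF.1; have d2 := cdD sF.2; have d3 := cdD sa.1; have d4 := cdD sa.2
  have d5 := cdD sB.1; have d6 := cdD sB.2
  have d7 := cdD (cdDeriv sF.1); have d8 := cdD (cdDeriv sF.2)
  have d9 := cdD (cdDeriv sa.1); have d10 := cdD (cdDeriv sa.2)
  have d11 := cdD (cdDeriv sB.1); have d12 := cdD (cdDeriv sB.2)
  rcases hF with ⟨rfl, h2⟩ | ⟨rfl, h1⟩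
  · refine Prod.ext ?_ ?_ <;> funext x <;>
      simp only [Lder, pmul, Prod.fst_add, Prod.snd_add, Pi.add_apply, Prod.smul_fst,
        Prod.smul_snd, Pi.smul_apply, smul_eq_mul, Nat.zero_mul, pow_zero, h2, Pi.zero_apply,
        derivZeroFun, mul_zero, zero_mul, add_zero, zero_add, one_mul] <;>
      (try simp (disch := fun_prop) only [deriv_fun_add, deriv_fun_mul, deriv_const_mul, deriv_const', deriv_const]) <;> ring
  · rcases ha with ⟨rfl, g2⟩ | ⟨rfl, g1⟩
    · refine Prod.ext ?_ ?_ <;> funext x <;>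
        simp only [Lder, pmul, Prod.fst_add, Prod.snd_add, Pi.add_apply, Prod.smul_fst,
          Prod.smul_snd, Pi.smul_apply, smul_eq_mul, Nat.mul_zero, Nat.mul_one, pow_zero, pow_one,
          h1, g2, Pi.zero_apply, derivZeroFun, mul_zero, zero_mul, add_zero, zero_add,
          one_mul] <;>
        (try simp (disch := fun_prop) only [deriv_fun_add, deriv_fun_mul, deriv_const_mul, deriv_const',
          deriv_const]) <;> ring
    · refine Prod.ext ?_ ?_ <;> funext x <;>
        simp only [Lder, pmul, Prod.fst_add, Prod.snd_add, Pi.add_apply, Prod.smul_fst,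
          Prod.smul_snd, Pi.smul_apply, smul_eq_mul, Nat.mul_zero, Nat.mul_one, pow_zero, pow_one,
          h1, g1, Pi.zero_apply, derivZeroFun, mul_zero, zero_mul, add_zero, zero_add,
          one_mul] <;>
        (try simp (disch := fun_prop) only [deriv_fun_add, deriv_fun_mul, deriv_const_mul, deriv_const',
          deriv_const]) <;> ring

-- Part E1 : super-Leibniz for iterates of D
lemma m1mod (a : ℕ) : (-1:ℝ)^(a % 2) = (-1:ℝ)^a := m1eq (by omega)

lemma DnPmul {c : SPair} {q : ℕ} (hc : IsHom c q) (sc : Sm c) {H : SPair} (sH : Sm H) :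
    ∀ n, D^[n] (pmul c H) = ∑ r ∈ Finset.range (n+1),
      ((sbinom n r : ℝ) * (-1:ℝ)^((q + r)*(n - r))) • pmul (D^[r] c) (D^[n-r] H)
  | 0 => by
    simp [sb_self, Finset.range_one]
  | (n+1) => by
    have hsm : ∀ r, Sm (pmul (D^[r] c) (D^[n-r] H)) :=
      fun r => smPmul (smDn sc r) (smDn sH _)
    rw [Function.iterate_succ_apply', DnPmul hc sc sH n,
      D_sum (fun r _ => smSmul _ (hsm r))]
    have step1 : ∀ r ∈ Finset.range (n+1),
        D (((sbinom n r : ℝ) * (-1:ℝ)^((q + r)*(n - r))) • pmul (D^[r] c) (D^[n-r] H))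
          = ((sbinom n r : ℝ) * (-1:ℝ)^((q + r)*(n - r))) • pmul (D^[r+1] c) (D^[n-r] H)
            + ((sbinom n r : ℝ) * (-1:ℝ)^((q + r)*(n - r)) * (-1:ℝ)^(q+r)) •
                pmul (D^[r] c) (D^[n+1-r] H) := by
      intro r hr
      have hr' : r ≤ n := by simpa [Nat.lt_succ_iff] using hr
      rw [D_smul _ (hsm r), Dpmul (homDn hc r) (smDn sc r) (smDn sH _), smul_add, smul_smul,
        ← Function.iterate_succ_apply' D r c, m1mod (q+r),
        ← Function.iterate_succ_apply' D (n-r) H]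
      simp only [Nat.succ_eq_add_one]
      rw [show (n - r) + 1 = n + 1 - r by omega]
    rw [Finset.sum_congr rfl step1, Finset.sum_add_distrib]
    -- now handle the target
    rw [Finset.sum_range_succ'
      (fun r => ((sbinom (n+1) r : ℝ) * (-1:ℝ)^((q + r)*(n + 1 - r))) •
        pmul (D^[r] c) (D^[n+1-r] H)) (n+1)]
    have split : ∀ r ∈ Finset.range (n+1),
        ((sbinom (n+1) (r+1) : ℝ) * (-1:ℝ)^((q + (r+1))*(n + 1 - (r+1)))) •
            pmul (D^[r+1] c) (D^[n+1-(r+1)] H)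
          = ((sbinom n r : ℝ) * (-1:ℝ)^((q + r)*(n - r))) • pmul (D^[r+1] c) (D^[n-r] H)
            + ((sbinom n (r+1) : ℝ) * (-1:ℝ)^((q + (r+1))*(n - r))) •
                pmul (D^[r+1] c) (D^[n-r] H) := by
      intro r hr
      have hr' : r ≤ n := by simpa [Nat.lt_succ_iff] using hr
      rw [show n + 1 - (r+1) = n - r by omega, ← add_smul]
      congr 1
      rw [sbRec hr']
      have : (-1:ℝ)^((n-r) + (q + (r+1))*(n - r)) = (-1:ℝ)^((q + r)*(n - r)) := by
        apply m1eq
        obtain ⟨d, rfl⟩ : ∃ d, n = r + d := ⟨n - r, by omega⟩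
        have e1 : r + d - r = d := by omega
        rw [e1, show d + (q + (r+1))*d + (q+r)*d = 2*((q+r+1)*d) by ring]
        omega
      calc ((sbinom n (r+1) : ℝ) + (-1:ℝ)^(n-r) * (sbinom n r : ℝ))
            * (-1:ℝ)^((q + (r+1))*(n - r))
          = (sbinom n r : ℝ) * (-1:ℝ)^((n-r) + (q + (r+1))*(n - r))
            + (sbinom n (r+1) : ℝ) * (-1:ℝ)^((q + (r+1))*(n - r)) := by
            rw [pow_add]; ring
        _ = (sbinom n r : ℝ) * (-1:ℝ)^((q + r)*(n - r))
            + (sbinom n (r+1) : ℝ) * (-1:ℝ)^((q + (r+1))*(n - r)) := by rw [this]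
        _ = _ := by ring
    rw [Finset.sum_congr rfl split, Finset.sum_add_distrib]
    -- goal : ΣX + ΣY = (ΣX + Σγ) + β₀ • P₀
    have e2 : ∑ r ∈ Finset.range (n+1),
        ((sbinom n r : ℝ) * (-1:ℝ)^((q + r)*(n - r)) * (-1:ℝ)^(q+r)) •
          pmul (D^[r] c) (D^[n+1-r] H)
        = (∑ r ∈ Finset.range (n+1),
            ((sbinom n (r+1) : ℝ) * (-1:ℝ)^((q + (r+1))*(n - r))) •
              pmul (D^[r+1] c) (D^[n-r] H))
          + ((sbinom (n+1) 0 : ℝ) * (-1:ℝ)^((q + 0)*(n + 1 - 0))) •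
              pmul (D^[0] c) (D^[n+1-0] H) := by
      rw [Finset.sum_range_succ' (fun r =>
        ((sbinom n r : ℝ) * (-1:ℝ)^((q + r)*(n - r)) * (-1:ℝ)^(q+r)) •
          pmul (D^[r] c) (D^[n+1-r] H)) n]
      congr 1
      · -- sums over range n vs range (n+1); extend by the vanishing top term
        rw [Finset.sum_range_succ]
        rw [show (sbinom n (n+1) : ℝ) = 0 by rw [sb_gt (by omega)]; norm_num]
        rw [zero_mul, zero_smul, add_zero]
        apply Finset.sum_congr rfl
        intro r hr
        have hr' : r < n := by simpa [Finset.mem_range] using hr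
        rw [show n + 1 - (r+1) = n - r by omega]
        have hs : (sbinom n (r+1) : ℝ) * (-1:ℝ)^((q + (r+1))*(n - (r+1))) * (-1:ℝ)^(q+(r+1))
            = (sbinom n (r+1) : ℝ) * (-1:ℝ)^((q + (r+1))*(n - r)) := by
          rw [mul_assoc, ← pow_add]
          have heq : (-1:ℝ)^((q + (r+1))*(n - (r+1)) + (q+(r+1))) = (-1:ℝ)^((q + (r+1))*(n - r)) := by
            apply m1eq
            obtain ⟨d, hd⟩ : ∃ d, n = r + 1 + d := ⟨n - r - 1, by omega⟩
            subst hd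
            rw [show r + 1 + d - (r+1) = d by omega, show r + 1 + d - r = d + 1 by omega,
              show (q+(r+1))*d + (q+(r+1)) + (q+(r+1))*(d+1) = 2*((q+(r+1))*(d+1)) by ring]
            omega
          rw [heq]
        rw [hs]
      · -- bottom terms
        have hs : (sbinom n 0 : ℝ) * (-1:ℝ)^((q + 0)*(n - 0)) * (-1:ℝ)^(q+0)
            = (sbinom (n+1) 0 : ℝ) * (-1:ℝ)^((q + 0)*(n + 1 - 0)) := by
          rw [Nat.sub_zero, Nat.sub_zero, sb_zero, sb_zero, mul_assoc, ← pow_add]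
          have heq : (-1:ℝ)^((q+0)*n + (q+0)) = (-1:ℝ)^((q + 0)*(n+1)) := by
            apply m1eq
            rw [show (q+0)*n + (q+0) + (q+0)*(n+1) = 2*((q+0)*(n+1)) by ring]
            omega
          rw [heq]
        rw [hs]
    rw [e2]
    abel

-- Part E2 : iterated commutation lemma
lemma main_c {F : SPair} {pF : ℕ} (hF : IsHom F pF) (sF : Sm F) :
    ∀ (j : ℕ) (l : ℝ) (G : SPair), Sm G →
      Lder (l + (j:ℝ)/2) F (D^[j] G)
        = ((-1:ℝ)^(pF*j)) • D^[j] (Lder l F G)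
          - ∑ i ∈ Finset.range j, ((-1:ℝ)^(pF*(j-i)) * zeta i j l) •
              pmul (D^[j-i] (pderiv F)) (D^[i] G) := by
  intro j
  induction j with
  | zero =>
      intro l G sG
      simp
  | succ j IH =>
      intro l G sG
      have sDG := smD sG
      have sF' := smPderiv sF
      have sDF' := smD sF'
      have hDF' : IsHom (D (pderiv F)) ((pF+1)%2) := homD (homPderiv hF)
      have hpF : pF = 0 ∨ pF = 1 := by
        rcases hF with ⟨h,_⟩|⟨h,_⟩
        · exact Or.inl h
        · exact Or.inr h
      have e3 : D^[j+1] (Lder l F G)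
          = ((-1:ℝ)^pF) • D^[j] (Lder (l+1/2) F (D G))
            + l • D^[j] (pmul (D (pderiv F)) G) := by
        rw [Function.iterate_succ_apply, lderD hF sF sG l,
          Dn_add j (smSmul _ (smLder _ sF sDG)) (smSmul _ (smPmul sDF' sG)),
          Dn_smul j _ (smLder _ sF sDG), Dn_smul j _ (smPmul sDF' sG)]
      have e4 : D^[j] (Lder (l+1/2) F (D G))
          = ((-1:ℝ)^(pF*j)) • (Lder (l+1/2+(j:ℝ)/2) F (D^[j+1] G)
              + ∑ i ∈ Finset.range j, ((-1:ℝ)^(pF*(j-i)) * zeta i j (l+1/2)) •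
                  pmul (D^[j-i] (pderiv F)) (D^[i] (D G))) := by
        have h := IH (l+1/2) (D G) sDG
        rw [← Function.iterate_succ_apply D j G] at h
        rw [h, sub_add_cancel, smul_smul, m1sq, one_smul]
      have e5 := DnPmul hDF' sDF' sG j
      -- reindexed multiplication-operator sum
      have hW : ((-1:ℝ)^(pF*(j+1)) * l) • (∑ r ∈ Finset.range (j+1),
            ((sbinom j r : ℝ) * (-1:ℝ)^(((pF+1)%2 + r)*(j - r))) •
              pmul (D^[r] (D (pderiv F))) (D^[j-r] G))
          = ∑ i ∈ Finset.range (j+1),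
              (((-1:ℝ)^(pF*(j+1)) * l) *
                ((sbinom j (j-i) : ℝ) * (-1:ℝ)^(((pF+1)%2 + (j-i))*i))) •
                pmul (D^[j+1-i] (pderiv F)) (D^[i] G) := by
        rw [Finset.smul_sum]
        rw [← Finset.sum_range_reflect (fun i =>
          (((-1:ℝ)^(pF*(j+1)) * l) *
            ((sbinom j (j-i) : ℝ) * (-1:ℝ)^(((pF+1)%2 + (j-i))*i))) •
            pmul (D^[j+1-i] (pderiv F)) (D^[i] G)) (j+1)]
        apply Finset.sum_congr rfl
        intro r hr
        have hr' : r ≤ j := by simpa [Nat.lt_succ_iff] using hr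
        rw [smul_smul, ← Function.iterate_succ_apply D r (pderiv F)]
        simp only [Nat.succ_eq_add_one]
        rw [show j + 1 - 1 - r = j - r by omega, show j - (j - r) = r by omega,
          show j + 1 - (j - r) = r + 1 by omega]
      have key : (∑ i ∈ Finset.range (j+1), ((-1:ℝ)^(pF*(j+1-i)) * zeta i (j+1) l) •
              pmul (D^[j+1-i] (pderiv F)) (D^[i] G))
          = (∑ i ∈ Finset.range j, ((-1:ℝ)^(pF*(j-i)) * zeta i j (l+1/2)) •
              pmul (D^[j-i] (pderiv F)) (D^[i] (D G)))
            + ∑ i ∈ Finset.range (j+1),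
              (((-1:ℝ)^(pF*(j+1)) * l) *
                ((sbinom j (j-i) : ℝ) * (-1:ℝ)^(((pF+1)%2 + (j-i))*i))) •
                pmul (D^[j+1-i] (pderiv F)) (D^[i] G) := by
        rw [← sub_eq_iff_eq_add]
        rw [← Finset.sum_sub_distrib]
        have perterm : ∀ i ∈ Finset.range (j+1),
            ((-1:ℝ)^(pF*(j+1-i)) * zeta i (j+1) l) • pmul (D^[j+1-i] (pderiv F)) (D^[i] G)
              - (((-1:ℝ)^(pF*(j+1)) * l) *
                  ((sbinom j (j-i) : ℝ) * (-1:ℝ)^(((pF+1)%2 + (j-i))*i))) •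
                  pmul (D^[j+1-i] (pderiv F)) (D^[i] G)
            = (((-1:ℝ)^(pF*(j+1-i)) * zeta i (j+1) l)
                - (((-1:ℝ)^(pF*(j+1)) * l) *
                  ((sbinom j (j-i) : ℝ) * (-1:ℝ)^(((pF+1)%2 + (j-i))*i)))) •
                pmul (D^[j+1-i] (pderiv F)) (D^[i] G) := by
          intro i _
          rw [sub_smul]
        rw [Finset.sum_congr rfl perterm]
        rw [Finset.sum_range_succ' (fun i =>
          (((-1:ℝ)^(pF*(j+1-i)) * zeta i (j+1) l)
            - (((-1:ℝ)^(pF*(j+1)) * l) *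
              ((sbinom j (j-i) : ℝ) * (-1:ℝ)^(((pF+1)%2 + (j-i))*i)))) •
            pmul (D^[j+1-i] (pderiv F)) (D^[i] G)) j]
        have bot : (((-1:ℝ)^(pF*(j+1-0)) * zeta 0 (j+1) l)
            - (((-1:ℝ)^(pF*(j+1)) * l) *
              ((sbinom j (j-0) : ℝ) * (-1:ℝ)^(((pF+1)%2 + (j-0))*0)))) = 0 := by
          rw [Nat.sub_zero, Nat.sub_zero, Nat.mul_zero, pow_zero, sb_self, zeta_zero_succ]
          push_cast; ring
        rw [bot, zero_smul, add_zero]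
        apply Finset.sum_congr rfl
        intro i hi
        have hij : i < j := by simpa [Finset.mem_range] using hi
        rw [show j + 1 - (i+1) = j - i by omega, Function.iterate_succ_apply D i G,
          show j - (i+1) = j - i - 1 by omega, zeta_rec hij l]
        have hsc : ((-1:ℝ)^(pF*(j-i)) * (zeta i j (l+1/2)
              + (-1:ℝ)^((j-i)*(i+1)) * l * (sbinom j (j-i-1) : ℝ)))
            - (((-1:ℝ)^(pF*(j+1)) * l) *
              ((sbinom j (j-i-1) : ℝ) * (-1:ℝ)^(((pF+1)%2 + (j-i-1))*(i+1))))
            = (-1:ℝ)^(pF*(j-i)) * zeta i j (l+1/2) := by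
          have hsign : (-1:ℝ)^(pF*(j-i)) * (-1:ℝ)^((j-i)*(i+1))
              = (-1:ℝ)^(pF*(j+1)) * (-1:ℝ)^(((pF+1)%2 + (j-i-1))*(i+1)) := by
            rw [← pow_add, ← pow_add]
            apply m1eq
            obtain ⟨d, hd⟩ : ∃ d, j = i + 1 + d := ⟨j - i - 1, by omega⟩
            subst hd
            rw [show i + 1 + d - i - 1 = d by omega, show i + 1 + d - i = d + 1 by omega]
            rcases hpF with rfl | rfl
            · rw [show 0*(d+1) + (d+1)*(i+1) + (0*(i+1+d+1) + ((0+1)%2 + d)*(i+1))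
                = 2*((d+1)*(i+1)) by norm_num; ring]
              omega
            · rw [show 1*(d+1) + (d+1)*(i+1) + (1*(i+1+d+1) + ((1+1)%2 + d)*(i+1))
                = 2*(d*i + 2*d + i + 2) by norm_num; ring]
              omega
          calc ((-1:ℝ)^(pF*(j-i)) * (zeta i j (l+1/2)
                + (-1:ℝ)^((j-i)*(i+1)) * l * (sbinom j (j-i-1) : ℝ)))
              - (((-1:ℝ)^(pF*(j+1)) * l) *
                ((sbinom j (j-i-1) : ℝ) * (-1:ℝ)^(((pF+1)%2 + (j-i-1))*(i+1))))
              = (-1:ℝ)^(pF*(j-i)) * zeta i j (l+1/2)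
                + ((-1:ℝ)^(pF*(j-i)) * (-1:ℝ)^((j-i)*(i+1))
                  - (-1:ℝ)^(pF*(j+1)) * (-1:ℝ)^(((pF+1)%2 + (j-i-1))*(i+1)))
                  * (l * (sbinom j (j-i-1) : ℝ)) := by ring
            _ = (-1:ℝ)^(pF*(j-i)) * zeta i j (l+1/2) := by rw [hsign]; ring
        rw [hsc]
      -- final assembly
      rw [show l + ((j+1 : ℕ) : ℝ)/2 = l + 1/2 + (j:ℝ)/2 by push_cast; ring]
      rw [e3, e4, e5, smul_smul ((-1:ℝ)^pF), smul_add, smul_smul, smul_smul]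
      rw [show ((-1:ℝ)^(pF*(j+1)) * ((-1:ℝ)^pF * (-1:ℝ)^(pF*j))) = 1 by
        rw [← pow_add, ← pow_add, show pF*(j+1) + (pF + pF*j) = 2*(pF*(j+1)) by ring,
          pow_mul]; norm_num]
      rw [one_smul, hW, key]
      abel

-- Part F : single term lemma and the final assembly
lemma pmul_sub (A B C : SPair) : pmul A (B - C) = pmul A B - pmul A C := by
  unfold pmul; refine Prod.ext ?_ ?_ <;> funext x <;> simp <;> ring

lemma singleTerm {F a : SPair} {pF pa : ℕ} (hF : IsHom F pF) (ha : IsHom a pa)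
    (sF : Sm F) (sa : Sm a) {G : SPair} (sG : Sm G) (j : ℕ) (l m : ℝ) :
    Lder m F (pmul a (D^[j] G)) - ((-1:ℝ)^((pa + j)*pF)) • pmul a (D^[j] (Lder l F G))
      = pmul (Lder (m - l - (j:ℝ)/2) F a) (D^[j] G)
        - ∑ i ∈ Finset.range j, ((-1:ℝ)^((pF + pa)*(j-i)) * zeta i j l) •
            pmul (pmul (D^[j-i] (pderiv F)) a) (D^[i] G) := by
  have hpF : pF = 0 ∨ pF = 1 := by
    rcases hF with ⟨h,_⟩|⟨h,_⟩
    · exact Or.inl h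
    · exact Or.inr h
  rw [lderLeibniz hF ha sF sa (smDn sG j) m (l + (j:ℝ)/2),
    show m - (l + (j:ℝ)/2) = m - l - (j:ℝ)/2 by ring,
    main_c hF sF j l G sG, pmul_sub, pmul_smul, smul_sub, smul_smul,
    show (-1:ℝ)^(pF*pa) * (-1:ℝ)^(pF*j) = (-1:ℝ)^((pa+j)*pF) by
      rw [← pow_add]; apply m1eq
      rw [show pF*pa + pF*j + (pa+j)*pF = 2*(pF*pa + pF*j) by ring]
      omega]
  have hS : ((-1:ℝ)^(pF*pa)) • pmul a (∑ i ∈ Finset.range j,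
        ((-1:ℝ)^(pF*(j-i)) * zeta i j l) • pmul (D^[j-i] (pderiv F)) (D^[i] G))
      = ∑ i ∈ Finset.range j, ((-1:ℝ)^((pF + pa)*(j-i)) * zeta i j l) •
          pmul (pmul (D^[j-i] (pderiv F)) a) (D^[i] G) := by
    rw [pmul_sum₂, Finset.smul_sum]
    apply Finset.sum_congr rfl
    intro i _
    rw [pmul_smul, smul_smul, passoc]
    rcases ha with ⟨rfl, ha2⟩ | ⟨rfl, ha1⟩
    · simp only [Nat.mul_zero, pow_zero, one_mul, Nat.add_zero]
    · rcases homDn (homPderiv hF) (j-i) with ⟨he, _⟩ | ⟨_, hu1⟩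
      · have hsc : (-1:ℝ)^(pF*1) * ((-1:ℝ)^(pF*(j-i)) * zeta i j l)
            = (-1:ℝ)^((pF+1)*(j-i)) * zeta i j l := by
          rw [← mul_assoc, ← pow_add]
          have : (-1:ℝ)^(pF*1 + pF*(j-i)) = (-1:ℝ)^((pF+1)*(j-i)) := by
            apply m1eq
            rw [show pF*1 + pF*(j-i) + (pF+1)*(j-i) = 2*(pF*(j-i)) + (pF + (j-i)) by ring]
            generalize pF * (j - i) = k
            omega
          rw [this]
        rw [hsc]
      · have hz : pmul (pmul (D^[j-i] (pderiv F)) a) (D^[i] G) = 0 := by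
          unfold pmul
          refine Prod.ext ?_ ?_ <;> funext x <;> simp [hu1, ha1]
        rw [hz, smul_zero, smul_zero]
  rw [hS]
  abel


/-- Lemma 5.1: the natural K(1)-action on differential operators
A = Σ_i M_{a_i} ∘ η̄^i from λ-densities to μ-densities is again of the same
form, with the explicit coefficients a_i^F. -/
theorem stmt11 (l m : ℝ) (ℓ : ℕ) (F : SPair) (pF : ℕ)
    (hFhom : IsHom F pF) (hFmod : InModel F)
    (a : ℕ → SPair) (pa : ℕ → ℕ) (p : ℕ)
    (ha : ∀ i ≤ ℓ, IsHom (a i) (pa i) ∧ InModel (a i) ∧ (pa i + i) % 2 = p % 2)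
    (G : SPair) (hGmod : InModel G) :
    Lder m F (∑ i ∈ Finset.range (ℓ + 1), pmul (a i) (D^[i] G))
      - ((-1 : ℝ) ^ (p * pF)) •
          (∑ i ∈ Finset.range (ℓ + 1), pmul (a i) (D^[i] (Lder l F G)))
    = ∑ i ∈ Finset.range (ℓ + 1),
        pmul
          (Lder (m - l - (i : ℝ) / 2) F (a i)
            - ∑ j ∈ Finset.Icc (i + 1) ℓ,
                ((-1 : ℝ) ^ ((pF + pa j) * (j - i)) * zeta i j l) •
                  pmul (D^[j - i] (pderiv F)) (a j))
          (D^[i] G) := by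
  have sF : Sm F := ⟨hFmod.1, hFmod.2.1⟩
  have sG : Sm G := ⟨hGmod.1, hGmod.2.1⟩
  have sa : ∀ i ≤ ℓ, Sm (a i) := fun i hi => ⟨(ha i hi).2.1.1, (ha i hi).2.1.2.1⟩
  have hpF : pF = 0 ∨ pF = 1 := by
    rcases hFhom with ⟨h,_⟩|⟨h,_⟩
    · exact Or.inl h
    · exact Or.inr h
  rw [Lder_sum m F (fun i hi =>
    smPmul (sa i (by simpa [Nat.lt_succ_iff] using hi)) (smDn sG i))]
  rw [Finset.smul_sum, ← Finset.sum_sub_distrib]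
  have step : ∀ k ∈ Finset.range (ℓ+1),
      Lder m F (pmul (a k) (D^[k] G))
          - ((-1:ℝ)^(p*pF)) • pmul (a k) (D^[k] (Lder l F G))
        = pmul (Lder (m - l - (k:ℝ)/2) F (a k)) (D^[k] G)
          - ∑ i ∈ Finset.range k, ((-1:ℝ)^((pF + pa k)*(k-i)) * zeta i k l) •
              pmul (pmul (D^[k-i] (pderiv F)) (a k)) (D^[i] G) := by
    intro k hk
    have hk' : k ≤ ℓ := by simpa [Nat.lt_succ_iff] using hk
    obtain ⟨hhom, hmod, hpar⟩ := ha k hk'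
    have hsgn : (-1:ℝ)^(p*pF) = (-1:ℝ)^((pa k + k)*pF) := by
      apply m1eq
      rcases hpF with rfl | rfl <;> omega
    rw [hsgn, singleTerm hFhom hhom sF ⟨hmod.1, hmod.2.1⟩ sG k l m]
  rw [Finset.sum_congr rfl step, Finset.sum_sub_distrib]
  have rhs : ∀ i ∈ Finset.range (ℓ+1),
      pmul (Lder (m - l - (i:ℝ)/2) F (a i)
          - ∑ j ∈ Finset.Icc (i+1) ℓ, ((-1:ℝ)^((pF + pa j)*(j-i)) * zeta i j l) •
              pmul (D^[j-i] (pderiv F)) (a j)) (D^[i] G)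
        = pmul (Lder (m - l - (i:ℝ)/2) F (a i)) (D^[i] G)
          - ∑ j ∈ Finset.Icc (i+1) ℓ, ((-1:ℝ)^((pF + pa j)*(j-i)) * zeta i j l) •
              pmul (pmul (D^[j-i] (pderiv F)) (a j)) (D^[i] G) := by
    intro i _
    rw [pmul_sub', pmul_sum]
    congr 1
    apply Finset.sum_congr rfl
    intro jj _
    rw [pmul_smul']
  rw [Finset.sum_congr rfl rhs, Finset.sum_sub_distrib]
  congr 1
  apply Finset.sum_comm'
  intro x y
  simp only [Finset.mem_range, Finset.mem_Icc]
  omega
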